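/- arXiv:2107.05746 — 6 statements merged into one kernel-verified Lean document; each statement's English description precedes it below -/
import Mathlib

section
/- Suppose agent i has some good ℓ with u_{i,ℓ} = 1, all prices satisfy ∑_j p_j ≤ 2n (hence p_ℓ ≤ 2n), and value_p(i) ≤ 0.9. Then any optimal dual solution (α*, μ*) satisfies α* ≥ 1/(20n). -/
theorem hz_dual_alpha_lower_bound_general
    (n : ℕ) (u p : Fin n → ℝ) (α μ : ℝ) (ℓ : Fin n)
    (huℓ : u ℓ = 1)
    (hpℓ : p ℓ ≤ 2 * n)
    (hαnn : 0 ≤ α)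
    (hfeas : ∀ j, α * p j + μ ≥ u j)
    (hvalue : α + μ ≤ 0.9) :
    α ≥ 1 / (20 * n) := by
  have hgap : 1 / 10 ≤ α * p ℓ := by linarith [hfeas ℓ]
  have hbudget : α * p ℓ ≤ α * (2 * n) := mul_le_mul_of_nonneg_left hpℓ hαnn
  exact div_le_of_le_mul₀ (by positivity) hαnn (by linarith)

/-- If agent i has a good ℓ with u_{i,ℓ} = 1, p_ℓ ≤ 2n, and
value_p(i) = α* + μ* ≤ 0.9, then α* ≥ 1/(20n). -/
theorem hz_dual_alpha_lower_bound
    (n : ℕ) (hn : 0 < n) (u p : Fin n → ℝ) (α μ : ℝ) (ℓ : Fin n)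
    (hu : ∀ j, u j ∈ Set.Icc (0:ℝ) 1)
    (hpnn : ∀ j, 0 ≤ p j)
    (hsum : (∑ j, p j) ≤ 2 * n)
    (huℓ : u ℓ = 1)
    (hpℓ : p ℓ ≤ 2 * n)
    (hαnn : 0 ≤ α)
    (hfeas : ∀ j, α * p j + μ ≥ u j)
    (hvalue : α + μ ≤ 0.9) :
    α ≥ 1 / (20 * n) :=
  hz_dual_alpha_lower_bound_general n u p α μ ℓ huℓ hpℓ hαnn hfeas hvalue
end

section
/- Let (x,p) be an ε-approximate HZ equilibrium and i an agent with value_p(i) ≤ 0.9, a good ℓ with u_{i,ℓ} = 1, and ∑_j p_j ≤ 2n. Then the cost of agent i's bundle satisfies ∑_j p_j x_{i,j} ≥ 1 − 20nε. -/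
/-!
The dual constraint at the good `ℓ` with `u ℓ = 1`, together with `α + μ ≤ 0.9`, forces
`α * p ℓ ≥ 0.1`, so the budget bound `p ℓ ≤ ∑ p ≤ 2n` gives `α ≥ 1/(20n)`. Weak duality bounds the
utility of the bundle by `α * cost + μ`; comparing with the approximate optimality
`utility ≥ α + μ - ε` yields `α * cost ≥ α - ε`, i.e. `cost ≥ 1 - ε/α ≥ 1 - 20nε`.
-/

open Finset

section

variable {ι : Type*} [Fintype ι]

theorem sum_mul_le_of_forall_le_mul_add {u p x : ι → ℝ} {α μ : ℝ}
    (hxnn : ∀ j, 0 ≤ x j) (hx1 : ∑ j, x j = 1) (hfeas : ∀ j, u j ≤ α * p j + μ) :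
    ∑ j, u j * x j ≤ α * ∑ j, p j * x j + μ :=
  calc ∑ j, u j * x j ≤ ∑ j, (α * p j + μ) * x j :=
        sum_le_sum fun j _ => mul_le_mul_of_nonneg_right (hfeas j) (hxnn j)
    _ = α * ∑ j, p j * x j + μ * ∑ j, x j := by
        simp only [add_mul, sum_add_distrib, mul_sum, mul_assoc]
    _ = α * ∑ j, p j * x j + μ := by rw [hx1, mul_one]

theorem one_le_ten_mul_mul_sum {p : ι → ℝ} {α μ : ℝ} {ℓ : ι}
    (hαnn : 0 ≤ α) (hpnn : ∀ j, 0 ≤ p j)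
    (hfeas : 1 ≤ α * p ℓ + μ) (hvalue : α + μ ≤ 0.9) :
    1 ≤ 10 * (α * ∑ j, p j) := by
  have hpℓ : α * p ℓ ≤ α * ∑ j, p j :=
    mul_le_mul_of_nonneg_left (single_le_sum (fun j _ => hpnn j) (mem_univ ℓ)) hαnn
  linarith

end

theorem one_sub_mul_le_of_sub_le_mul {α ε K S : ℝ} (hα : 0 ≤ α) (hε : 0 ≤ ε) (hK : 1 ≤ K * α)
    (h : α - ε ≤ α * S) : 1 - K * ε ≤ S := by
  have hαpos : 0 < α := hα.lt_of_ne (by rintro rfl; norm_num at hK)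
  have key : α * (1 - K * ε) ≤ α * S := by nlinarith [mul_nonneg hε (sub_nonneg.mpr hK)]
  exact le_of_mul_le_mul_left key hαpos

theorem hz_cost_lower_bound_general
    (n : ℕ) (ε : ℝ) (hε : 0 ≤ ε)
    (u p x : Fin n → ℝ) (α μ : ℝ) (ℓ : Fin n)
    (hpnn : ∀ j, 0 ≤ p j)
    (hsum : (∑ j, p j) ≤ 2 * n)
    (huℓ : u ℓ = 1)
    (hxnn : ∀ j, 0 ≤ x j)
    (hx1 : (∑ j, x j) = 1)
    (hαnn : 0 ≤ α)
    (hfeas : ∀ j, α * p j + μ ≥ u j)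
    (hvalue : α + μ ≤ 0.9)
    (happrox : (∑ j, u j * x j) ≥ (α + μ) - ε) :
    (∑ j, p j * x j) ≥ 1 - 20 * n * ε := by
  have hαn : 1 ≤ 20 * n * α := by
    calc 1 ≤ 10 * (α * ∑ j, p j) := one_le_ten_mul_mul_sum hαnn hpnn (huℓ ▸ hfeas ℓ) hvalue
      _ ≤ 10 * (α * (2 * n)) := by gcongr
      _ = 20 * n * α := by ring
  have hdual := sum_mul_le_of_forall_le_mul_add hxnn hx1 hfeas
  exact one_sub_mul_le_of_sub_le_mul hαnn hε hαn (by linarith)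

/-- In an ε-approximate HZ equilibrium, if agent i has value_p(i) ≤ 0.9,
a good ℓ with u_{i,ℓ} = 1, and ∑_j p_j ≤ 2n, then the cost of agent i's bundle
satisfies ∑_j p_j x_{i,j} ≥ 1 − 20nε.  Here x is agent i's bundle and (α, μ) is an
optimal dual solution, so α + μ = value_p(i). -/
theorem hz_cost_lower_bound
    (n : ℕ) (hn : 0 < n) (ε : ℝ) (hε : 0 ≤ ε)
    (u p x : Fin n → ℝ) (α μ : ℝ) (ℓ : Fin n)
    (hu : ∀ j, u j ∈ Set.Icc (0:ℝ) 1)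
    (hpnn : ∀ j, 0 ≤ p j)
    (hsum : (∑ j, p j) ≤ 2 * n)
    (huℓ : u ℓ = 1)
    (hxnn : ∀ j, 0 ≤ x j)
    (hx1 : (∑ j, x j) = 1)
    (hcost : (∑ j, p j * x j) ≤ 1 + ε)
    (hαnn : 0 ≤ α) (hα1 : α ≤ 1) (hμnn : 0 ≤ μ)
    (hfeas : ∀ j, α * p j + μ ≥ u j)
    (hvalue : α + μ ≤ 0.9)
    (happrox : (∑ j, u j * x j) ≥ (α + μ) - ε) :
    (∑ j, p j * x j) ≥ 1 - 20 * n * ε :=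
  hz_cost_lower_bound_general n ε hε u p x α μ ℓ hpnn hsum huℓ hxnn hx1 hαnn hfeas hvalue happrox
end

section
/- Call a good j δ-suboptimal for agent i if u_{i,j} + δ ≤ α* p_j + μ*, where (α*, μ*) is an optimal dual solution with α* ≤ 1. In any ε-approximate HZ equilibrium, the total allocation in agent i's bundle to δ-suboptimal goods is at most 2ε/δ. -/
/-!
Dual feasibility makes every term of `∑ⱼ (α pⱼ + μ - uⱼ) xⱼ` nonnegative, and each δ-suboptimal good
contributes at least `δ xⱼ` to it. On the other hand, by the budget and utility conditions of the
ε-approximate equilibrium the whole sum is at most `α (1 + ε) + μ - (α + μ - ε) = (1 + α) ε ≤ 2 ε`.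
-/

open Finset

theorem mul_sum_filter_add_le_le_sum_sub_mul {ι : Type*} (s : Finset ι) {f g x : ι → ℝ} (δ : ℝ)
    (hfg : ∀ j ∈ s, f j ≤ g j) (hx : ∀ j ∈ s, 0 ≤ x j) :
    δ * ∑ j ∈ s.filter (fun j => f j + δ ≤ g j), x j ≤ ∑ j ∈ s, (g j - f j) * x j := by
  rw [mul_sum]
  calc ∑ j ∈ s.filter (fun j => f j + δ ≤ g j), δ * x j
      ≤ ∑ j ∈ s.filter (fun j => f j + δ ≤ g j), (g j - f j) * x j := by
        refine sum_le_sum fun j hj => ?_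
        obtain ⟨hjs, hgap⟩ := mem_filter.mp hj
        exact mul_le_mul_of_nonneg_right (by linarith) (hx j hjs)
    _ ≤ ∑ j ∈ s, (g j - f j) * x j :=
        sum_le_sum_of_subset_of_nonneg (filter_subset _ s) fun j hj _ =>
          mul_nonneg (sub_nonneg.mpr (hfg j hj)) (hx j hj)

theorem hz_suboptimal_allocation_general
    (n : ℕ) (ε δ : ℝ) (hε : 0 ≤ ε) (hδ : 0 < δ)
    (u p x : Fin n → ℝ) (α μ : ℝ)
    (hxnn : ∀ j, 0 ≤ x j)
    (hx1 : (∑ j, x j) = 1)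
    (hcost : (∑ j, p j * x j) ≤ 1 + ε)
    (hαnn : 0 ≤ α) (hα1 : α ≤ 1)
    (hfeas : ∀ j, u j ≤ α * p j + μ)
    (happrox : (∑ j, u j * x j) ≥ (α + μ) - ε) :
    (∑ j ∈ Finset.univ.filter (fun j => u j + δ ≤ α * p j + μ), x j) ≤ 2 * ε / δ := by
  have hgap := mul_sum_filter_add_le_le_sum_sub_mul univ δ
    (fun j _ => hfeas j) (fun j _ => hxnn j)
  have hslack : ∑ j, (α * p j + μ - u j) * x j = α * ∑ j, p j * x j + μ - ∑ j, u j * x j := by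
    simp only [sub_mul, add_mul, sum_sub_distrib, sum_add_distrib, mul_assoc, ← mul_sum, hx1,
      mul_one]
  have hbudget : α * ∑ j, p j * x j ≤ α * (1 + ε) := mul_le_mul_of_nonneg_left hcost hαnn
  have hαε : α * ε ≤ ε := mul_le_of_le_one_left hε hα1
  rw [le_div_iff₀' hδ]
  linarith

open Finset in
/-- In an ε-approximate HZ equilibrium, the total allocation in agent i's
bundle to δ-suboptimal goods (goods j with u_{i,j} + δ ≤ α* p_j + μ*) is at most 2ε/δ. -/
theorem hz_suboptimal_allocation
    (n : ℕ) (ε δ : ℝ) (hε : 0 ≤ ε) (hδ : 0 < δ)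
    (u p x : Fin n → ℝ) (α μ : ℝ)
    (hu : ∀ j, u j ∈ Set.Icc (0:ℝ) 1)
    (hpnn : ∀ j, 0 ≤ p j)
    (hxnn : ∀ j, 0 ≤ x j)
    (hx1 : (∑ j, x j) = 1)
    (hcost : (∑ j, p j * x j) ≤ 1 + ε)
    (hαnn : 0 ≤ α) (hα1 : α ≤ 1) (hμnn : 0 ≤ μ)
    (hfeas : ∀ j, u j ≤ α * p j + μ)
    (happrox : (∑ j, u j * x j) ≥ (α + μ) - ε) :
    (∑ j ∈ Finset.univ.filter (fun j => u j + δ ≤ α * p j + μ), x j) ≤ 2 * ε / δ :=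
  hz_suboptimal_allocation_general n ε δ hε hδ u p x α μ hxnn hx1 hcost hαnn hα1 hfeas happrox
end

section
/- Let i be an agent and ℓ a good with u_{i,ℓ} = 1. For any nonnegative price vector p with min_j p_j = 0, the optimal value value_p(i) of agent i's LP satisfies value_p(i) ≥ min(1, 1/p_ℓ). -/
open Finset

/-
Mix the good `ℓ` with a free good `j₀`: take `t = min 1 (1 / p ℓ)` of `ℓ` and the remaining `1 - t`
of `j₀`, which costs nothing. This bundle is affordable and earns at least `t · u ℓ = t`.
-/

section LPValues

variable {ι : Type*} [Fintype ι]

def feasibleValues (u p : ι → ℝ) : Set ℝ :=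
  {v | ∃ y : ι → ℝ, (∀ j, 0 ≤ y j) ∧ (∑ j, y j) = 1 ∧ (∑ j, p j * y j) ≤ 1 ∧
    v = ∑ j, u j * y j}

variable [DecidableEq ι]

theorem sum_mul_single_add_single (f : ι → ℝ) (a b : ι) (s t : ℝ) :
    ∑ j, f j * (Pi.single a s + Pi.single b t : ι → ℝ) j = f a * s + f b * t := by
  simp [mul_add, sum_add_distrib, Pi.single_apply]

theorem mix_mem_feasibleValues {u p : ι → ℝ} {a b : ι} (hb : p b = 0) {t : ℝ}
    (ht₀ : 0 ≤ t) (ht₁ : t ≤ 1) (hta : p a * t ≤ 1) :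
    u a * t + u b * (1 - t) ∈ feasibleValues u p := by
  have hy : (0 : ι → ℝ) ≤ Pi.single a t + Pi.single b (1 - t) :=
    add_nonneg (Pi.single_nonneg.2 ht₀) (Pi.single_nonneg.2 (sub_nonneg.2 ht₁))
  refine ⟨Pi.single a t + Pi.single b (1 - t), hy, ?_, ?_,
    (sum_mul_single_add_single u a b t (1 - t)).symm⟩
  · simpa using sum_mul_single_add_single (fun _ => (1 : ℝ)) a b t (1 - t)
  · rw [sum_mul_single_add_single, hb]
    linarith

end LPValues

theorem mul_min_one_one_div_le_one {x : ℝ} (hx : 0 ≤ x) : x * min 1 (1 / x) ≤ 1 := by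
  rcases hx.eq_or_lt with rfl | hx
  · simp
  · calc x * min 1 (1 / x) ≤ x * (1 / x) := mul_le_mul_of_nonneg_left (min_le_right _ _) hx.le
      _ = 1 := mul_one_div_cancel hx.ne'

/-- If agent i has a good ℓ with u_{i,ℓ} = 1 and prices are normalized
(some good has price 0), then value_p(i) ≥ min(1, 1/p_ℓ). -/
theorem hz_value_lower_bound
    (n : ℕ) (u p : Fin n → ℝ) (val : ℝ) (ℓ : Fin n)
    (hu : ∀ j, u j ∈ Set.Icc (0:ℝ) 1)
    (huℓ : u ℓ = 1)
    (hpnn : ∀ j, 0 ≤ p j)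
    (hzero : ∃ j, p j = 0)
    (hval : IsGreatest {v : ℝ | ∃ y : Fin n → ℝ, (∀ j, 0 ≤ y j) ∧
        (∑ j, y j) = 1 ∧ (∑ j, p j * y j) ≤ 1 ∧ v = ∑ j, u j * y j} val) :
    val ≥ min 1 (1 / p ℓ) := by
  obtain ⟨j₀, hj₀⟩ := hzero
  set t := min 1 (1 / p ℓ)
  have ht₀ : 0 ≤ t := le_min zero_le_one (one_div_nonneg.2 (hpnn ℓ))
  have ht₁ : t ≤ 1 := min_le_left _ _
  have hmix := mix_mem_feasibleValues (u := u) hj₀ ht₀ ht₁ (mul_min_one_one_div_le_one (hpnn ℓ))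
  calc t ≤ u ℓ * t + u j₀ * (1 - t) := by
        rw [huℓ, one_mul]
        exact le_add_of_nonneg_right (mul_nonneg (hu j₀).1 (sub_nonneg.2 ht₁))
    _ ≤ val := hval.2 hmix
end

section
/- Let (x,p) be an exact HZ equilibrium of a market M and let p' be defined by p'_j = 1 + r(p_j − 1) for all j, for some r > 0 with r ≤ 1/(1−p_j) for every j with p_j < 1 (so p' is nonnegative). Then (x, p') is also an exact HZ equilibrium of M. -/
/-!
On the simplex `∑ j, y j = 1`, the cost under `p' = 1 + r (p - 1)` is `1 + r (∑ j, p j * y j - 1)`,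
an increasing affine function of the cost under `p`; hence `p'` and `p` cut out the same budget set,
so every agent faces the same optimisation problem.
-/

/-- An exact HZ equilibrium of an HZ market with `n` agents and `n` goods. -/
def HZEquilibrium (n : ℕ) (u x : Fin n → Fin n → ℝ) (p : Fin n → ℝ) : Prop :=
  (∀ i j, 0 ≤ x i j) ∧ (∀ j, 0 ≤ p j) ∧
  (∀ j, (∑ i, x i j) = 1) ∧ (∀ i, (∑ j, x i j) = 1) ∧
  (∀ i, (∑ j, p j * x i j) ≤ 1) ∧
  (∀ i, ∀ y : Fin n → ℝ, (∀ j, 0 ≤ y j) → (∑ j, y j) = 1 →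
      (∑ j, p j * y j) ≤ 1 → (∑ j, u i j * y j) ≤ ∑ j, u i j * x i j)

open Finset

section AffinePrices

variable {ι : Type*} {s : Finset ι} {p y : ι → ℝ} {r : ℝ}

theorem sum_affine_mul_of_sum_eq_one (hy : ∑ j ∈ s, y j = 1) :
    ∑ j ∈ s, (1 + r * (p j - 1)) * y j = 1 + r * (∑ j ∈ s, p j * y j - 1) := by
  have hterm : ∀ j, (1 + r * (p j - 1)) * y j = y j + r * (p j * y j - y j) := fun j => by ring
  simp only [hterm, sum_add_distrib, ← mul_sum, sum_sub_distrib, hy]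

theorem sum_affine_mul_le_one_iff (hr : 0 < r) (hy : ∑ j ∈ s, y j = 1) :
    ∑ j ∈ s, (1 + r * (p j - 1)) * y j ≤ 1 ↔ ∑ j ∈ s, p j * y j ≤ 1 := by
  rw [sum_affine_mul_of_sum_eq_one hy, add_le_iff_nonpos_right, ← mul_zero r,
    mul_le_mul_iff_right₀ hr, sub_nonpos]

end AffinePrices

theorem affine_price_nonneg {a r : ℝ} (hr : 0 < r) (hra : a < 1 → r ≤ 1 / (1 - a)) :
    0 ≤ 1 + r * (a - 1) := by
  rcases lt_or_ge a 1 with ha | ha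
  · have hr' := hra ha
    rw [le_div_iff₀ (sub_pos.2 ha)] at hr'
    linarith
  · have := mul_nonneg hr.le (sub_nonneg.2 ha)
    linarith

/-- If (x,p) is an exact HZ equilibrium and p'_j = 1 + r(p_j − 1) for
r > 0 with r ≤ 1/(1 − p_j) whenever p_j < 1, then (x, p') is also an HZ equilibrium. -/
theorem hz_scaling_invariance
    (n : ℕ) (u x : Fin n → Fin n → ℝ) (p : Fin n → ℝ)
    (heq : HZEquilibrium n u x p)
    (r : ℝ) (hr : 0 < r)
    (hr2 : ∀ j, p j < 1 → r ≤ 1 / (1 - p j)) :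
    HZEquilibrium n u x (fun j => 1 + r * (p j - 1)) := by
  obtain ⟨hx, -, hcol, hrow, hbud, hopt⟩ := heq
  refine ⟨hx, fun j => affine_price_nonneg hr (hr2 j), hcol, hrow,
    fun i => (sum_affine_mul_le_one_iff hr (hrow i)).2 (hbud i), ?_⟩
  intro i y hy hy1 hbudy
  exact hopt i y hy hy1 ((sum_affine_mul_le_one_iff hr hy1).1 hbudy)
end

section
/- In the 4-agent market of the previous statements, the set of normalized equilibrium price vectors is exactly {(0,2,0), (0, 8/5, 4/5), (4/5, 8/5, 0)}; in particular there are at least two (in fact three) distinct equilibrium price vectors, and the set of equilibria is disconnected. -/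
/-- Utilities of the 4-agent market: agents 0,1 (group A₁) have utilities
(1/2, 1, 1, 0) for goods (G₁, G₂ (two copies), G₃); agents 2,3 (group A₂) have
utilities (0, 1, 1, 1/2). -/
noncomputable def gadgetUtil : Fin 4 → Fin 4 → ℝ :=
  fun i j => if (i : ℕ) < 2 then ![1/2, 1, 1, 0] j else ![0, 1, 1, 1/2] j

/-- The set of normalized (minimum price 0) equilibrium price vectors of the market. -/
def normEqPrices : Set (Fin 4 → ℝ) :=
  {p | (∃ x, HZEquilibrium 4 gadgetUtil x p) ∧ ∃ j, p j = 0}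

/-! Goods `1` and `2` (the two copies of G₂) cost more than `1`, for otherwise every agent would
buy only them. So no agent is satiated, and every equilibrium bundle is a cheapest bundle among
those its owner likes at least as much. This forces `p 1 = p 2 =: q` and tight budgets, so the
prices add up to the total money `4`. If `p 0 = 0` then `p 3 = 4 - 2q`. Agents `0, 1` spend
their budget on goods `1, 2` and fill up with the free good `0`, so agents `2, 3` hold all of
good `3`. They would swap it for good `1` if `2 p 3 > q`, and, when `q < 2`, swap goods `0, 1, 2`
for it if `2 p 3 < q`, which leaves too much of good `0` to agents `0, 1`. Hence `q = 2`, or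
`2 p 3 = q = 8/5`. The case `p 3 = 0` is the mirror image under reversing goods and agents. -/

namespace HZEquilibrium

variable {n : ℕ} {u x : Fin n → Fin n → ℝ} {p : Fin n → ℝ}

theorem price_nonneg (h : HZEquilibrium n u x p) (j : Fin n) : 0 ≤ p j :=
  h.2.1 j

theorem sum_alloc_eq_one (h : HZEquilibrium n u x p) (j : Fin n) : ∑ i, x i j = 1 :=
  h.2.2.1 j

theorem mem_stdSimplex (h : HZEquilibrium n u x p) (i : Fin n) : x i ∈ stdSimplex ℝ (Fin n) :=
  ⟨h.1 i, h.2.2.2.1 i⟩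

theorem cost_le_one (h : HZEquilibrium n u x p) (i : Fin n) : p ⬝ᵥ x i ≤ 1 :=
  h.2.2.2.2.1 i

theorem exists_pos (h : HZEquilibrium n u x p) (j : Fin n) : ∃ i, 0 < x i j := by
  obtain ⟨i, -, hi⟩ := Finset.exists_lt_of_sum_lt (s := Finset.univ) (f := 0) (g := (x · j))
    (by simp [h.sum_alloc_eq_one j])
  exact ⟨i, hi⟩

theorem utility_le (h : HZEquilibrium n u x p) (i : Fin n) {y : Fin n → ℝ}
    (hy : y ∈ stdSimplex ℝ (Fin n)) (hcost : p ⬝ᵥ y ≤ 1) : u i ⬝ᵥ y ≤ u i ⬝ᵥ x i :=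
  h.2.2.2.2.2 i y hy.1 hy.2 hcost

/-- A bundle `y` as good as `x i` but cheaper could be mixed with the better bundle `z` within the
budget. -/
theorem one_le_cost_of_utility_le (h : HZEquilibrium n u x p) {i : Fin n} {y z : Fin n → ℝ}
    (hz : z ∈ stdSimplex ℝ (Fin n)) (hxz : u i ⬝ᵥ x i < u i ⬝ᵥ z)
    (hy : y ∈ stdSimplex ℝ (Fin n)) (hxy : u i ⬝ᵥ x i ≤ u i ⬝ᵥ y) : 1 ≤ p ⬝ᵥ y := by
  by_contra! hcost
  have hcost_nonneg {w : Fin n → ℝ} (hw : w ∈ stdSimplex ℝ (Fin n)) : 0 ≤ p ⬝ᵥ w :=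
    dotProduct_nonneg_of_nonneg h.price_nonneg hw.1
  obtain ⟨t, ht0, ht1, htz⟩ : ∃ t : ℝ, 0 < t ∧ t ≤ 1 ∧ t * p ⬝ᵥ z ≤ 1 - p ⬝ᵥ y := by
    have hd : 0 < 1 + p ⬝ᵥ z := by linarith [hcost_nonneg hz]
    refine ⟨(1 - p ⬝ᵥ y) / (1 + p ⬝ᵥ z), div_pos (by linarith) hd,
      (div_le_one hd).2 (by linarith [hcost_nonneg hy, hcost_nonneg hz]), ?_⟩
    rw [div_mul_eq_mul_div, div_le_iff₀ hd]
    nlinarith [hcost_nonneg hz]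
  have hw : (1 - t) • y + t • z ∈ stdSimplex ℝ (Fin n) :=
    convex_stdSimplex ℝ (Fin n) hy hz (by linarith) ht0.le (by ring)
  have hyx := h.utility_le i hy hcost.le
  have hmix := h.utility_le i hw
    (by simp only [dotProduct_add, dotProduct_smul, smul_eq_mul]
        nlinarith [mul_nonneg ht0.le (hcost_nonneg hy)])
  simp only [dotProduct_add, dotProduct_smul, smul_eq_mul] at hmix
  nlinarith [mul_pos ht0 (sub_pos.2 (hyx.trans_lt hxz))]

theorem sum_prices_eq (h : HZEquilibrium n u x p) (htight : ∀ i, p ⬝ᵥ x i = 1) :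
    ∑ j, p j = n := by
  calc ∑ j, p j = ∑ j, p j * ∑ i, x i j := by simp only [h.sum_alloc_eq_one, mul_one]
    _ = ∑ i, p ⬝ᵥ x i := by simp only [dotProduct, Finset.mul_sum]; exact Finset.sum_comm
    _ = n := by simp [htight]

theorem comp_perm (h : HZEquilibrium n u x p) {σ τ : Equiv.Perm (Fin n)}
    (hu : ∀ i j, u (σ i) (τ j) = u i j) :
    HZEquilibrium n u (fun i j => x (σ i) (τ j)) (fun j => p (τ j)) := by
  obtain ⟨hx, hp, hcol, hrow, hbudget, hopt⟩ := h
  refine ⟨fun i j => hx _ _, fun j => hp _, fun j => ?_, fun i => ?_, fun i => ?_, ?_⟩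
  · exact (Equiv.sum_comp σ fun i => x i (τ j)).trans (hcol _)
  · exact (Equiv.sum_comp τ (x (σ i))).trans (hrow _)
  · exact (Equiv.sum_comp τ fun j => p j * x (σ i) j).trans_le (hbudget _)
  intro i y hy0 hy1 hcost
  have key := hopt (σ i) (fun j => y (τ.symm j)) (fun j => hy0 _)
    ((Equiv.sum_comp τ.symm y).trans hy1)
    (by rw [← Equiv.sum_comp τ]; simpa using hcost)
  rw [← Equiv.sum_comp τ, ← Equiv.sum_comp τ (fun j => u (σ i) j * x (σ i) j)] at key
  simpa [hu] using key

end HZEquilibrium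

namespace Gadget

variable {x : Fin 4 → Fin 4 → ℝ} {p : Fin 4 → ℝ}

theorem sum_four_eq_one {y : Fin 4 → ℝ} (hy : y ∈ stdSimplex ℝ (Fin 4)) :
    y 0 + y 1 + y 2 + y 3 = 1 := by
  simpa [Fin.sum_univ_four] using hy.2

theorem mem_stdSimplex_four {a b c d : ℝ} (ha : 0 ≤ a) (hb : 0 ≤ b) (hc : 0 ≤ c) (hd : 0 ≤ d)
    (hsum : a + b + c + d = 1) : ![a, b, c, d] ∈ stdSimplex ℝ (Fin 4) :=
  ⟨fun j => by fin_cases j <;> assumption, by simpa [Fin.sum_univ_four] using hsum⟩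

theorem gadgetUtil_one (i : Fin 4) : gadgetUtil i 1 = 1 := by
  unfold gadgetUtil; split_ifs <;> rfl

theorem gadgetUtil_two (i : Fin 4) : gadgetUtil i 2 = 1 := by
  unfold gadgetUtil; split_ifs <;> rfl

theorem gadgetUtil_swap (i j : Fin 4) : gadgetUtil i (Equiv.swap 1 2 j) = gadgetUtil i j := by
  fin_cases j <;> simp [Equiv.swap_apply_of_ne_of_ne, gadgetUtil_one, gadgetUtil_two]

theorem gadgetUtil_rev (i j : Fin 4) : gadgetUtil (Fin.rev i) (Fin.rev j) = gadgetUtil i j := by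
  fin_cases i <;> fin_cases j <;> simp [gadgetUtil]

theorem gadgetUtil_dotProduct_of_lt_two {i : Fin 4} (hi : (i : ℕ) < 2) (y : Fin 4 → ℝ) :
    gadgetUtil i ⬝ᵥ y = y 0 / 2 + y 1 + y 2 := by
  simp only [dotProduct, Fin.sum_univ_four, gadgetUtil, hi, ↓reduceIte, Matrix.cons_val]; ring

theorem gadgetUtil_dotProduct_of_not_lt_two {i : Fin 4} (hi : ¬ (i : ℕ) < 2) (y : Fin 4 → ℝ) :
    gadgetUtil i ⬝ᵥ y = y 1 + y 2 + y 3 / 2 := by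
  simp only [dotProduct, Fin.sum_univ_four, gadgetUtil, hi, ↓reduceIte, Matrix.cons_val]; ring

theorem gadgetUtil_dotProduct_le (i : Fin 4) {y : Fin 4 → ℝ} (hy : y ∈ stdSimplex ℝ (Fin 4)) :
    gadgetUtil i ⬝ᵥ y ≤ 1 - (y 0 + y 3) / 2 := by
  have hsum := sum_four_eq_one hy
  by_cases hi : (i : ℕ) < 2
  · rw [gadgetUtil_dotProduct_of_lt_two hi]; linarith [hy.1 3]
  · rw [gadgetUtil_dotProduct_of_not_lt_two hi]; linarith [hy.1 0]

theorem one_lt_price_of_gadgetUtil_eq_one (h : HZEquilibrium 4 gadgetUtil x p) {k : Fin 4}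
    (hk : ∀ i, gadgetUtil i k = 1) : 1 < p k := by
  by_contra! hpk
  obtain ⟨i, hi⟩ := h.exists_pos 0
  have hsingle := h.utility_le i (single_mem_stdSimplex ℝ k) (by simpa using hpk)
  simp only [dotProduct_single, hk, mul_one] at hsingle
  linarith [gadgetUtil_dotProduct_le i (h.mem_stdSimplex i), (h.mem_stdSimplex i).1 3]

theorem one_lt_price_one (h : HZEquilibrium 4 gadgetUtil x p) : 1 < p 1 :=
  one_lt_price_of_gadgetUtil_eq_one h gadgetUtil_one

theorem one_lt_price_two (h : HZEquilibrium 4 gadgetUtil x p) : 1 < p 2 :=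
  one_lt_price_of_gadgetUtil_eq_one h gadgetUtil_two

/-- No agent is satiated: utility `1` needs a bundle of goods `1` and `2`, which costs more than
`1`. -/
theorem one_le_cost (h : HZEquilibrium 4 gadgetUtil x p) (i : Fin 4) {y : Fin 4 → ℝ}
    (hy : y ∈ stdSimplex ℝ (Fin 4)) (hxy : gadgetUtil i ⬝ᵥ x i ≤ gadgetUtil i ⬝ᵥ y) :
    1 ≤ p ⬝ᵥ y := by
  refine h.one_le_cost_of_utility_le (single_mem_stdSimplex ℝ 1) ?_ hy hxy
  rw [dotProduct_single, gadgetUtil_one, mul_one]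
  by_contra! hsat
  have hxi := h.mem_stdSimplex i
  have hsum := sum_four_eq_one hxi
  have h0 : x i 0 = 0 := by linarith [gadgetUtil_dotProduct_le i hxi, hxi.1 0, hxi.1 3]
  have h3 : x i 3 = 0 := by linarith [gadgetUtil_dotProduct_le i hxi, hxi.1 0, hxi.1 3]
  have hcost := h.cost_le_one i
  simp only [dotProduct, Fin.sum_univ_four, h0, h3, mul_zero, zero_add, add_zero] at hcost
  have hmin : 1 < min (p 1) (p 2) := lt_min (one_lt_price_one h) (one_lt_price_two h)
  nlinarith [min_le_left (p 1) (p 2), min_le_right (p 1) (p 2), hxi.1 1, hxi.1 2]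

theorem cost_eq_one (h : HZEquilibrium 4 gadgetUtil x p) (i : Fin 4) : p ⬝ᵥ x i = 1 :=
  (h.cost_le_one i).antisymm (one_le_cost h i (h.mem_stdSimplex i) le_rfl)

theorem price_two_le_price_one (h : HZEquilibrium 4 gadgetUtil x p) : p 2 ≤ p 1 := by
  by_contra! hlt
  obtain ⟨i, hi⟩ := h.exists_pos 2
  have hxi := h.mem_stdSimplex i
  have hy : ![x i 0, x i 1 + x i 2, 0, x i 3] ∈ stdSimplex ℝ (Fin 4) :=
    mem_stdSimplex_four (hxi.1 0) (add_nonneg (hxi.1 1) (hxi.1 2)) le_rfl (hxi.1 3)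
      (by linarith [sum_four_eq_one hxi])
  have hcost := one_le_cost h i hy <| le_of_eq <| by
    simp only [dotProduct, Fin.sum_univ_four, gadgetUtil_one, gadgetUtil_two, Matrix.cons_val]; ring
  have hbudget := h.cost_le_one i
  simp only [dotProduct, Fin.sum_univ_four, Matrix.cons_val] at hcost hbudget
  nlinarith [mul_pos (sub_pos.2 hlt) hi]

theorem price_one_eq_price_two (h : HZEquilibrium 4 gadgetUtil x p) : p 1 = p 2 :=
  le_antisymm (price_two_le_price_one (h.comp_perm (σ := 1) gadgetUtil_swap))
    (price_two_le_price_one h)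

theorem cost_eq_of_price_zero_eq_zero (h : HZEquilibrium 4 gadgetUtil x p) (hp0 : p 0 = 0)
    (y : Fin 4 → ℝ) : p ⬝ᵥ y = p 1 * (y 1 + y 2) + p 3 * y 3 := by
  simp only [dotProduct, Fin.sum_univ_four, hp0, ← price_one_eq_price_two h]
  ring

theorem price_three_eq (h : HZEquilibrium 4 gadgetUtil x p) (hp0 : p 0 = 0) :
    p 3 = 4 - 2 * p 1 := by
  have hsum := h.sum_prices_eq (cost_eq_one h)
  simp only [Fin.sum_univ_four, hp0, ← price_one_eq_price_two h] at hsum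
  push_cast at hsum
  linarith

/-- Compare with spending the whole budget on good `1` and filling up with the free good `0`. -/
theorem x_three_eq_zero_and_price_mul_eq_one (h : HZEquilibrium 4 gadgetUtil x p)
    (hp0 : p 0 = 0) {i : Fin 4} (hi : (i : ℕ) < 2) :
    x i 3 = 0 ∧ p 1 * (x i 1 + x i 2) = 1 := by
  have hq := one_lt_price_one h
  have hxi := h.mem_stdSimplex i
  have hsum := sum_four_eq_one hxi
  have htight := cost_eq_one h i
  rw [cost_eq_of_price_zero_eq_zero h hp0] at htight
  have hinv : 1 / p 1 < 1 := (div_lt_one (by linarith)).2 hq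
  have hy : ![1 - 1 / p 1, 1 / p 1, 0, 0] ∈ stdSimplex ℝ (Fin 4) :=
    mem_stdSimplex_four (by linarith) (by positivity) le_rfl le_rfl (by ring)
  have hU := h.utility_le i hy
    (by rw [cost_eq_of_price_zero_eq_zero h hp0]; simp only [Matrix.cons_val]; field_simp; simp)
  rw [gadgetUtil_dotProduct_of_lt_two hi, gadgetUtil_dotProduct_of_lt_two hi] at hU
  simp only [Matrix.cons_val] at hU
  have hle : 1 ≤ p 1 * (x i 1 + x i 2 - x i 3) := by
    rw [← div_le_iff₀' (by linarith)]
    linarith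
  have h3 : x i 3 = 0 := by nlinarith [h.price_nonneg 3, hxi.1 3]
  exact ⟨h3, by rw [h3] at htight; linarith⟩

theorem x_zero_eq_zero_of_two_mul_price_three_lt (h : HZEquilibrium 4 gadgetUtil x p)
    (hp0 : p 0 = 0) {i : Fin 4} (hi : ¬ (i : ℕ) < 2) (h3 : 2 * p 3 < p 1) (hp3 : p 3 < 1) :
    x i 0 = 0 := by
  have hxi := h.mem_stdSimplex i
  have hsum := sum_four_eq_one hxi
  have htight := cost_eq_one h i
  rw [cost_eq_of_price_zero_eq_zero h hp0] at htight
  set s := x i 1 + x i 2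
  by_contra! hx0
  replace hx0 : 0 < x i 0 := (hxi.1 0).lt_of_ne' hx0
  have hs0 : 0 < s := by
    by_contra! hs0
    nlinarith [hxi.1 0, hxi.1 1, hxi.1 2, hxi.1 3, h.price_nonneg 3]
  -- as good as `x i`, and cheaper by `x i 0 * s * (p 1 - 2 * p 3)`
  have hy : ![x i 0 * (1 - s), (1 - x i 0) * x i 1, (1 - x i 0) * x i 2, x i 3 + 2 * x i 0 * s]
      ∈ stdSimplex ℝ (Fin 4) :=
    mem_stdSimplex_four (mul_nonneg (hxi.1 0) (by linarith [hxi.1 0, hxi.1 3]))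
      (mul_nonneg (by linarith [hxi.1 1, hxi.1 2, hxi.1 3]) (hxi.1 1))
      (mul_nonneg (by linarith [hxi.1 1, hxi.1 2, hxi.1 3]) (hxi.1 2))
      (add_nonneg (hxi.1 3) (by positivity)) (by linear_combination hsum)
  have hcost := one_le_cost h i hy (by
    rw [gadgetUtil_dotProduct_of_not_lt_two hi, gadgetUtil_dotProduct_of_not_lt_two hi]
    simp only [Matrix.cons_val]
    linarith)
  rw [cost_eq_of_price_zero_eq_zero h hp0] at hcost
  simp only [Matrix.cons_val] at hcost
  nlinarith [mul_pos (mul_pos hx0 hs0) (by linarith : 0 < p 1 - 2 * p 3)]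

theorem x_three_eq_zero_of_price_one_lt_two_mul (h : HZEquilibrium 4 gadgetUtil x p)
    (hp0 : p 0 = 0) {i : Fin 4} (hi : ¬ (i : ℕ) < 2) (h3 : p 1 < 2 * p 3) : x i 3 = 0 := by
  have hxi := h.mem_stdSimplex i
  have hsum := sum_four_eq_one hxi
  have htight := cost_eq_one h i
  rw [cost_eq_of_price_zero_eq_zero h hp0] at htight
  -- as good as `x i`, and cheaper by `x i 3 * (p 3 - p 1 / 2)`
  have hy : ![x i 0 + x i 3 / 2, x i 1 + x i 3 / 2, x i 2, 0] ∈ stdSimplex ℝ (Fin 4) :=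
    mem_stdSimplex_four (by linarith [hxi.1 0, hxi.1 3]) (by linarith [hxi.1 1, hxi.1 3])
      (hxi.1 2) le_rfl (by linarith)
  have hcost := one_le_cost h i hy (by
    rw [gadgetUtil_dotProduct_of_not_lt_two hi, gadgetUtil_dotProduct_of_not_lt_two hi]
    simp only [Matrix.cons_val]
    linarith)
  rw [cost_eq_of_price_zero_eq_zero h hp0] at hcost
  simp only [Matrix.cons_val] at hcost
  nlinarith [hxi.1 3]

theorem price_one_le_two_mul_price_three (h : HZEquilibrium 4 gadgetUtil x p) (hp0 : p 0 = 0)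
    (hlt : p 1 < 2) : p 1 ≤ 2 * p 3 := by
  by_contra! h3
  have hp3 := price_three_eq h hp0
  have hcol : x 0 0 + x 1 0 = 1 := by
    have hcol0 := h.sum_alloc_eq_one 0
    simp only [Fin.sum_univ_four] at hcol0
    linarith [x_zero_eq_zero_of_two_mul_price_three_lt h hp0 (i := 2) (by decide) h3 (by linarith),
      x_zero_eq_zero_of_two_mul_price_three_lt h hp0 (i := 3) (by decide) h3 (by linarith)]
  obtain ⟨h03, h0⟩ := x_three_eq_zero_and_price_mul_eq_one h hp0 (i := 0) (by decide)
  obtain ⟨h13, h1⟩ := x_three_eq_zero_and_price_mul_eq_one h hp0 (i := 1) (by decide)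
  have hs0 := sum_four_eq_one (h.mem_stdSimplex 0)
  have hs1 := sum_four_eq_one (h.mem_stdSimplex 1)
  have hq2 : p 1 = 2 := by
    linear_combination h0 + h1 - p 1 * (hs0 + hs1 - hcol) + p 1 * (h03 + h13)
  linarith

theorem two_mul_price_three_le_price_one (h : HZEquilibrium 4 gadgetUtil x p) (hp0 : p 0 = 0) :
    2 * p 3 ≤ p 1 := by
  by_contra! h3
  obtain ⟨i, hi⟩ := h.exists_pos 3
  by_cases hi2 : (i : ℕ) < 2
  · linarith [(x_three_eq_zero_and_price_mul_eq_one h hp0 hi2).1]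
  · linarith [x_three_eq_zero_of_price_one_lt_two_mul h hp0 hi2 h3]

theorem price_eq_of_price_zero_eq_zero (h : HZEquilibrium 4 gadgetUtil x p) (hp0 : p 0 = 0) :
    p = ![0, 2, 2, 0] ∨ p = ![0, 8/5, 8/5, 4/5] := by
  have hq := price_one_eq_price_two h
  have hp3 := price_three_eq h hp0
  rcases (show p 1 ≤ 2 by linarith [h.price_nonneg 3]).eq_or_lt with h2 | h2
  · left
    funext j; fin_cases j <;> simp <;> linarith
  · right
    have hle := price_one_le_two_mul_price_three h hp0 h2
    have hge := two_mul_price_three_le_price_one h hp0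
    funext j; fin_cases j <;> simp <;> linarith

theorem equilibrium_zero_two_two_zero : HZEquilibrium 4 gadgetUtil
    (fun i => if (i : ℕ) < 2 then ![1/2, 1/4, 1/4, 0] else ![0, 1/4, 1/4, 1/2])
    ![0, 2, 2, 0] := by
  refine ⟨?_, ?_, ?_, ?_, ?_, ?_⟩ <;> intro i <;> fin_cases i <;>
    simp [Fin.forall_fin_succ, Fin.sum_univ_four, gadgetUtil] <;> norm_num <;> intros <;> linarith

theorem equilibrium_zero_eight_fifths_eight_fifths_four_fifths : HZEquilibrium 4 gadgetUtil
    (fun i => if (i : ℕ) < 2 then ![3/8, 5/16, 5/16, 0] else ![1/8, 3/16, 3/16, 1/2])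
    ![0, 8/5, 8/5, 4/5] := by
  refine ⟨?_, ?_, ?_, ?_, ?_, ?_⟩ <;> intro i <;> fin_cases i <;>
    simp [Fin.forall_fin_succ, Fin.sum_univ_four, gadgetUtil] <;> norm_num <;> intros <;> linarith

theorem gadget_equilibrium_rev (h : HZEquilibrium 4 gadgetUtil x p) :
    HZEquilibrium 4 gadgetUtil (fun i j => x (Fin.rev i) (Fin.rev j)) (fun j => p (Fin.rev j)) :=
  h.comp_perm (σ := Fin.revPerm) (τ := Fin.revPerm) gadgetUtil_rev

theorem normEqPrices_eq :
    normEqPrices = {![0, 2, 2, 0], ![0, 8/5, 8/5, 4/5], ![4/5, 8/5, 8/5, 0]} := by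
  ext p
  simp only [Set.mem_insert_iff, Set.mem_singleton_iff]
  constructor
  · rintro ⟨⟨x, h⟩, j, hj⟩
    have h1 := one_lt_price_one h
    have h2 := one_lt_price_two h
    fin_cases j
    · exact (price_eq_of_price_zero_eq_zero h hj).imp_right Or.inl
    · linarith [show p 1 = 0 from hj]
    · linarith [show p 2 = 0 from hj]
    · have hp (k : Fin 4) : p k = (fun j => p (Fin.rev j)) (Fin.rev k) := by simp
      rcases price_eq_of_price_zero_eq_zero (gadget_equilibrium_rev h) hj with hrev | hrev
      · left; funext k; rw [hp, hrev]; fin_cases k <;> rfl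
      · right; right; funext k; rw [hp, hrev]; fin_cases k <;> rfl
  · rintro (rfl | rfl | rfl)
    · exact ⟨⟨_, equilibrium_zero_two_two_zero⟩, 0, rfl⟩
    · exact ⟨⟨_, equilibrium_zero_eight_fifths_eight_fifths_four_fifths⟩, 0, rfl⟩
    · have h := gadget_equilibrium_rev equilibrium_zero_eight_fifths_eight_fifths_four_fifths
      have hrev : (fun j => (![0, 8/5, 8/5, 4/5] : Fin 4 → ℝ) (Fin.rev j)) = ![4/5, 8/5, 8/5, 0] := by
        funext k; fin_cases k <;> rfl
      exact ⟨⟨_, hrev ▸ h⟩, 3, rfl⟩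

theorem not_isPreconnected_normEqPrices : ¬ IsPreconnected normEqPrices := by
  intro hconn
  have himage := isPreconnected_iff_ordConnected.1
    (hconn.image (fun p => p 3) (continuous_apply 3).continuousOn)
  rw [normEqPrices_eq] at himage
  have hmid := himage.out ⟨![0, 2, 2, 0], by simp, rfl⟩ ⟨![0, 8/5, 8/5, 4/5], by simp, rfl⟩
    (show (2 / 5 : ℝ) ∈ Set.Icc 0 (4 / 5) by norm_num)
  simp only [Set.mem_image, Set.mem_insert_iff, Set.mem_singleton_iff, exists_eq_or_imp,
    exists_eq_left, Matrix.cons_val] at hmid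
  norm_num at hmid

end Gadget

/-- The set of normalized equilibrium price vectors is exactly
{(0,2,2,0), (0,8/5,8/5,4/5), (4/5,8/5,8/5,0)}; these three are pairwise distinct,
so there are at least two (in fact three) equilibria and the set is disconnected. -/
theorem gadget_disconnected_equilibria :
    normEqPrices = {![0, 2, 2, 0], ![0, 8/5, 8/5, 4/5], ![4/5, 8/5, 8/5, 0]} ∧
    (![0, 2, 2, 0] : Fin 4 → ℝ) ≠ ![0, 8/5, 8/5, 4/5] ∧
    (![0, 2, 2, 0] : Fin 4 → ℝ) ≠ ![4/5, 8/5, 8/5, 0] ∧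
    (![0, 8/5, 8/5, 4/5] : Fin 4 → ℝ) ≠ ![4/5, 8/5, 8/5, 0] ∧
    ¬ IsPreconnected normEqPrices :=
  ⟨Gadget.normEqPrices_eq, by norm_num [funext_iff, Fin.forall_fin_succ],
    by norm_num [funext_iff, Fin.forall_fin_succ], by norm_num [funext_iff, Fin.forall_fin_succ],
    Gadget.not_isPreconnected_normEqPrices⟩
end
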